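/- arXiv:0806.2264 — 2 statements merged into one kernel-verified Lean document; each statement's English description precedes it below -/
import Mathlib

section
/- Let G be a graph model with web G = (G, i), and suppose α ∈ ⟦M⟧^G \ ⟦N⟧^G for closed λ-terms M, N. Then there exists a finite subpair A ⊑ G with α ∈ A such that for all partial pairs B satisfying A ⊑ B ⊑ G: (i) α ∈ ⟦M⟧^B \ ⟦N⟧^B, and (ii) α ∈ ⟦M⟧^{G_B̄} \ ⟦N⟧^{G_B̄}, where G_B̄ is the graph model generated by the free completion B̄ of B. -/
universe u v

/-- Untyped λ-terms in de Bruijn notation (over the countably infinite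
supply of variables `ℕ`). -/
inductive Term : Type
  | var : ℕ → Term
  | app : Term → Term → Term
  | lam : Term → Term
  deriving DecidableEq

namespace Term

/-- Shift the free variables `≥ d` up by one. -/
def lift (d : ℕ) : Term → Term
  | var n => if n < d then var n else var (n + 1)
  | app M N => app (lift d M) (lift d N)
  | lam M => lam (lift (d + 1) M)

/-- Capture-avoiding substitution of `N` for the free variable `k`. -/
def subst : Term → ℕ → Term → Term
  | var n, k, N => if n = k then N else if k < n then var (n - 1) else var n
  | app P Q, k, N => app (subst P k N) (subst Q k N)
  | lam P, k, N => lam (subst P (k + 1) (lift 0 N))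

/-- One-step β-reduction. -/
inductive Step : Term → Term → Prop
  | beta (M N : Term) : Step (app (lam M) N) (subst M 0 N)
  | appL {M M' : Term} (N : Term) : Step M M' → Step (app M N) (app M' N)
  | appR (M : Term) {N N' : Term} : Step N N' → Step (app M N) (app M N')
  | abs {M M' : Term} : Step M M' → Step (lam M) (lam M')

/-- β-conversion: the least equivalence relation containing one-step β-reduction. -/
inductive BetaConv : Term → Term → Prop
  | of {M N : Term} : Step M N → BetaConv M N
  | refl (M : Term) : BetaConv M M
  | symm {M N : Term} : BetaConv M N → BetaConv N M
  | trans {M N P : Term} : BetaConv M N → BetaConv N P → BetaConv M P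

/-- All free variables are `< d`. -/
def BoundedBy : Term → ℕ → Prop
  | var n, d => n < d
  | app M N, d => BoundedBy M d ∧ BoundedBy N d
  | lam M, d => BoundedBy M (d + 1)

/-- Closed λ-terms. -/
def Closed (M : Term) : Prop := BoundedBy M 0

/-- Terms of the form `y M₁ ⋯ Mₖ` (a variable applied to arguments). -/
inductive IsVarApp : Term → Prop
  | var (n : ℕ) : IsVarApp (var n)
  | app {M : Term} (N : Term) : IsVarApp M → IsVarApp (app M N)

/-- Head normal forms `λx₁…xₙ. y M₁ ⋯ Mₖ`. -/
inductive IsHnf : Term → Prop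
  | head {M : Term} : IsVarApp M → IsHnf M
  | abs {M : Term} : IsHnf M → IsHnf (lam M)

/-- A λ-term is solvable if it is β-convertible to a head normal form. -/
def Solvable (M : Term) : Prop := ∃ N, BetaConv M N ∧ IsHnf N

/-- Unsolvable λ-terms. -/
def Unsolvable (M : Term) : Prop := ¬ Solvable M

/-- β-normal forms: terms containing no β-redex. -/
def IsNormal : Term → Prop
  | var _ => True
  | lam M => IsNormal M
  | app M N => (∀ P, M ≠ lam P) ∧ IsNormal M ∧ IsNormal N

/-- A fixed effective bijective Gödel numbering of λ-terms. -/
def code : Term → ℕ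
  | var n => 3 * n
  | app M N => 3 * Nat.pair (code M) (code N) + 1
  | lam M => 3 * code M + 2

/-- `δ = λx.xx`. -/
def delta : Term := lam (app (var 0) (var 0))

/-- `Ω = (λx.xx)(λx.xx)`. -/
def Omega : Term := app delta delta

/-- `I = λx.x`. -/
def Idt : Term := lam (var 0)

end Term

open Term

/-- A set of λ-terms is r.e. if its set of Gödel codes is r.e. -/
def TermSetRe (V : Set Term) : Prop := REPred fun n : ℕ => ∃ M ∈ V, code M = n

/-- A set of λ-terms is co-r.e. if its set of Gödel codes is co-r.e.; since the
numbering is bijective this means that the code set of the complement is r.e. -/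
def TermSetCoRe (V : Set Term) : Prop := TermSetRe Vᶜ

/-- β-co-r.e. sets: co-r.e. sets of λ-terms closed under β-conversion. -/
def BetaCoRe (V : Set Term) : Prop :=
  (∀ M N, M ∈ V → BetaConv M N → N ∈ V) ∧ TermSetCoRe V

/-- A set of pairs of λ-terms is r.e. if the corresponding set of codes of
pairs is r.e. -/
def PairsRe (T : Set (Term × Term)) : Prop :=
  REPred fun n : ℕ => ∃ p ∈ T, Nat.pair (code p.1) (code p.2) = n

/-- λ-theories: congruences on Λ containing β-conversion. -/
def IsLambdaTheory (T : Term → Term → Prop) : Prop :=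
  Equivalence T ∧
  (∀ M M' N N', T M M' → T N N' → T (Term.app M N) (Term.app M' N')) ∧
  (∀ M M', T M M' → T (Term.lam M) (Term.lam M')) ∧
  (∀ M N, BetaConv M N → T M N)

/-- Partial pairs (as raw data): a carrier set together with a partial map `j`,
given as an `Option`-valued map on pairs of a subset and an element. -/
structure PrePair (α : Type u) : Type u where
  carrier : Set α
  j : Set α × α → Option α

namespace PrePair

variable {α : Type u}

/-- The defining conditions of a partial pair: the carrier is non-empty and `j`
is a partial injection `A* × A ⇀ A`. -/
def Valid (P : PrePair α) : Prop :=
  P.carrier.Nonempty ∧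
  (∀ a x y, P.j (a, x) = some y →
      a.Finite ∧ a ⊆ P.carrier ∧ x ∈ P.carrier ∧ y ∈ P.carrier) ∧
  (∀ p q y, P.j p = some y → P.j q = some y → p = q)

/-- Total pairs: `j` is defined on every pair of a finite subset of the
carrier and an element of the carrier. -/
def Total (P : PrePair α) : Prop :=
  ∀ a x, a.Finite → a ⊆ P.carrier → x ∈ P.carrier → ∃ y, P.j (a, x) = some y

/-- Webs of graph models: total pairs with infinite carrier. -/
def IsGraphModel (P : PrePair α) : Prop := P.Valid ∧ P.Total ∧ P.carrier.Infinite

/-- The subpair relation `A ⊑ B`. -/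
def Subpair (P Q : PrePair α) : Prop :=
  P.carrier ⊆ Q.carrier ∧ ∀ p y, P.j p = some y → Q.j p = some y

end PrePair

/-- Consing a value onto an environment (de Bruijn style). -/
def envCons {α : Type u} (s : Set α) (ρ : ℕ → Set α) : ℕ → Set α
  | 0 => s
  | n + 1 => ρ n

/-- The interpretation of a λ-term with respect to a partial pair and an
environment. -/
def interp {α : Type u} (P : PrePair α) : Term → (ℕ → Set α) → Set α
  | Term.var n, ρ => ρ n
  | Term.app M N, ρ =>
      {y | ∃ a : Set α, a.Finite ∧ a ⊆ interp P N ρ ∧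
        ∃ z, P.j (a, y) = some z ∧ z ∈ interp P M ρ}
  | Term.lam M, ρ =>
      {y | ∃ (a : Set α) (x : α), a.Finite ∧ P.j (a, x) = some y ∧
        x ∈ interp P M (envCons a ρ)}

/-- The interpretation of a closed λ-term. -/
def interpC {α : Type u} (P : PrePair α) (M : Term) : Set α :=
  interp P M fun _ => (∅ : Set α)

/-- The order theory of (the graph model generated by) a pair. -/
def ThLe {α : Type u} (P : PrePair α) : Set (Term × Term) :=
  {p | ∀ ρ : ℕ → Set α, (∀ n, ρ n ⊆ P.carrier) → interp P p.1 ρ ⊆ interp P p.2 ρ}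

/-- The equational theory of (the graph model generated by) a pair. -/
def Th {α : Type u} (P : PrePair α) : Set (Term × Term) :=
  {p | ∀ ρ : ℕ → Set α, (∀ n, ρ n ⊆ P.carrier) → interp P p.1 ρ = interp P p.2 ρ}

/-- Morphisms of partial pairs. -/
def IsMorphism {α : Type u} {β : Type v} (P : PrePair α) (Q : PrePair β)
    (f : α → β) : Prop :=
  Set.MapsTo f P.carrier Q.carrier ∧
  ∀ a x y, a ⊆ P.carrier → x ∈ P.carrier → P.j (a, x) = some y →
    Q.j (f '' a, f x) = some (f y)

/-- Isomorphisms of partial pairs: morphisms which are bijections between the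
carriers and whose inverse is also a morphism. -/
def IsIso {α : Type u} {β : Type v} (P : PrePair α) (Q : PrePair β)
    (f : α → β) : Prop :=
  IsMorphism P Q f ∧
  ∃ g : β → α, IsMorphism Q P g ∧
    (∀ x ∈ P.carrier, g (f x) = x) ∧ ∀ y ∈ Q.carrier, f (g y) = y

/-- The ambient type of the free completion: formal copies `base x` of the
original elements together with formal pairs `node`. -/
inductive FC (α : Type u) : Type u
  | base : α → FC α
  | node : List (FC α) → FC α → FC α

namespace FC

variable {α : Type u}

open scoped Classical

/-- A canonical list enumerating a finite set. -/
noncomputable def listOf (s : Set (FC α)) : List (FC α) :=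
  if h : s.Finite then h.toFinset.toList else []

/-- The copy of the original carrier inside `FC α`. -/
def baseSet (P : PrePair α) : Set (FC α) := base '' P.carrier

/-- `(a, x)` is the copy of a pair in the domain of `j`. -/
def IsOldDom (P : PrePair α) (a : Set (FC α)) (x : FC α) : Prop :=
  ∃ (a₀ : Set α) (x₀ : α), a = base '' a₀ ∧ x = base x₀ ∧ (P.j (a₀, x₀)).isSome

/-- The increasing stages `Aₙ` of the free completion:
`A₀ = A` and `A_{n+1} = A ∪ ((Aₙ* × Aₙ) ∖ dom j)`. -/
def stage (P : PrePair α) : ℕ → Set (FC α)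
  | 0 => baseSet P
  | n + 1 => baseSet P ∪
      {t | ∃ (a : Set (FC α)) (x : FC α), a.Finite ∧ a ⊆ stage P n ∧
        x ∈ stage P n ∧ ¬ IsOldDom P a x ∧ t = node (listOf a) x}

/-- The carrier `Ā = ⋃ₙ Aₙ` of the free completion. -/
def compCarrier (P : PrePair α) : Set (FC α) := ⋃ n, stage P n

/-- `y` is the copy of the old value `j (a₀, x₀)`, where `(a, x)` is the copy
of `(a₀, x₀) ∈ dom j`. -/
def OldVal (P : PrePair α) (a : Set (FC α)) (x y : FC α) : Prop :=
  ∃ (a₀ : Set α) (x₀ y₀ : α), a = base '' a₀ ∧ x = base x₀ ∧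
    P.j (a₀, x₀) = some y₀ ∧ y = base y₀

/-- The total injection `j̄` of the free completion: it extends `j` and sends
every other pair `(a, α)` of the completion to (the formal copy of) itself. -/
noncomputable def jbar (P : PrePair α) (p : Set (FC α) × FC α) : Option (FC α) :=
  if p.1.Finite ∧ p.1 ⊆ compCarrier P ∧ p.2 ∈ compCarrier P then
    if h : ∃ y, OldVal P p.1 p.2 y then some h.choose
    else some (node (listOf p.1) p.2)
  else none

end FC

/-- The free completion `Ā` of a partial pair `A`, as a total pair on `FC α`. -/
noncomputable def completion {α : Type u} (P : PrePair α) : PrePair (FC α) :=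
  ⟨FC.compCarrier P, FC.jbar P⟩

/-- The fixed effective encoding of finite subsets of `ℕ`. -/
def encF (s : Finset ℕ) : ℕ := s.sum fun i => 2 ^ i

/-- A partial pair on `ℕ` whose carrier is a decidable set and whose map `j` is
partial recursive with decidable domain (under the fixed effective encoding of
finite sets and pairs). -/
def ConcreteWE (Q : PrePair ℕ) : Prop :=
  ComputablePred (· ∈ Q.carrier) ∧
  ∃ f : ℕ →. ℕ, Nat.Partrec f ∧ ComputablePred (fun n => (f n).Dom) ∧
    ∀ (a : Finset ℕ) (x y : ℕ), Q.j (↑a, x) = some y ↔ y ∈ f (Nat.pair (encF a) x)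

/-- The range of `j` is decidable. -/
def ConcreteRange (Q : PrePair ℕ) : Prop :=
  ComputablePred fun y => ∃ p, Q.j p = some y

/-- Weakly effective partial pairs: partial pairs isomorphic to a partial pair
on `ℕ` with decidable carrier whose `j` is partial recursive with decidable
domain. -/
def WeaklyEffective {α : Type u} (P : PrePair α) : Prop :=
  ∃ Q : PrePair ℕ, ConcreteWE Q ∧ ∃ f : α → ℕ, IsIso P Q f

/-- Effective partial pairs: weakly effective via a pair whose `j` moreover has
decidable range. -/
def EffectivePair {α : Type u} (P : PrePair α) : Prop :=
  ∃ Q : PrePair ℕ, ConcreteWE Q ∧ ConcreteRange Q ∧ ∃ f : α → ℕ, IsIso P Q f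

/-- Effective total pairs: total pairs isomorphic to some `(ℕ, ℓ)` with `ℓ`
total recursive, injective and with decidable range. -/
def EffectiveTotalPair {α : Type u} (P : PrePair α) : Prop :=
  ∃ Q : PrePair ℕ, Q.carrier = Set.univ ∧
    (∃ f : ℕ → ℕ, Computable f ∧ Function.Injective f ∧
      ComputablePred (fun y => ∃ n, f n = y) ∧
      ∀ (a : Finset ℕ) (x : ℕ), Q.j (↑a, x) = some (f (Nat.pair (encF a) x))) ∧
    ∃ h : α → ℕ, IsIso P Q h


/-!
Membership `x ∈ ⟦M⟧` is witnessed by finitely many instances of `j` (induction on `M`), so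
the restriction `A` of `G` to these instances forces `x ∈ ⟦M⟧^B` for every `B ⊒ A`, and the
embedding `B → B̄` carries this to `B̄`. Interpretations grow along maps preserving `j`, and
both `B ⊑ G` and the canonical map `B̄ → G` (sending a formal pair to its value in the total
pair `G`) preserve `j`; hence `x ∉ ⟦N⟧^G` gives `x ∉ ⟦N⟧^B` and `x ∉ ⟦N⟧^B̄`.
-/

namespace PrePair

variable {α : Type u} {β : Type v}

def PreservesJ (f : α → β) (P : PrePair α) (Q : PrePair β) : Prop :=
  ∀ a x y, P.j (a, x) = some y → Q.j (f '' a, f x) = some (f y)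

theorem Subpair.preservesJ_id {P Q : PrePair α} (h : P.Subpair Q) : PreservesJ id P Q :=
  fun a x y hj => by simpa using h.2 _ _ hj

theorem PreservesJ.image_interp_subset {f : α → β} {P : PrePair α} {Q : PrePair β}
    (hf : PreservesJ f P Q) (M : Term) {ρ : ℕ → Set α} {ρ' : ℕ → Set β}
    (hρ : ∀ n, f '' ρ n ⊆ ρ' n) : f '' interp P M ρ ⊆ interp Q M ρ' := by
  induction M generalizing ρ ρ' with
  | var n => exact hρ n
  | app M N ihM ihN =>
    rintro _ ⟨y, ⟨a, ha, haN, z, hj, hz⟩, rfl⟩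
    exact ⟨f '' a, ha.image f, (Set.image_mono haN).trans (ihN hρ), f z, hf a y z hj,
      ihM hρ ⟨z, hz, rfl⟩⟩
  | lam M ih =>
    rintro _ ⟨w, ⟨a, u, ha, hj, hu⟩, rfl⟩
    refine ⟨f '' a, f u, ha.image f, hf a u w hj, ih ?_ ⟨u, hu, rfl⟩⟩
    rintro (_ | n)
    exacts [subset_rfl, hρ n]

theorem PreservesJ.mem_interpC {f : α → β} {P : PrePair α} {Q : PrePair β}
    (hf : PreservesJ f P Q) {M : Term} {x : α} (hx : x ∈ interpC P M) :
    f x ∈ interpC Q M :=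
  hf.image_interp_subset M (fun _ => by rw [Set.image_empty]) ⟨x, hx, rfl⟩

theorem Valid.interp_subset_carrier {P : PrePair α} (hP : P.Valid) (M : Term)
    {ρ : ℕ → Set α} (hρ : ∀ n, ρ n ⊆ P.carrier) : interp P M ρ ⊆ P.carrier := by
  cases M with
  | var n => exact hρ n
  | app M N => exact fun y ⟨a, _, _, z, hj, _⟩ => (hP.2.1 a y z hj).2.2.1
  | lam M => exact fun y ⟨a, u, _, hj, _⟩ => (hP.2.1 a u y hj).2.2.2

def Supports (G : PrePair α) (S : Set (Set α × α)) (M : Term) (ρ : ℕ → Set α) (x : α) :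
    Prop :=
  ∀ Q : PrePair α, (∀ p ∈ S, Q.j p = G.j p) → x ∈ interp Q M ρ

theorem Supports.mono {G : PrePair α} {S T : Set (Set α × α)} {M : Term} {ρ : ℕ → Set α}
    {x : α} (h : G.Supports S M ρ x) (hST : S ⊆ T) : G.Supports T M ρ x :=
  fun Q hQ => h Q fun p hp => hQ p (hST hp)

theorem exists_finite_supports (G : PrePair α) (M : Term) {ρ : ℕ → Set α} {x : α}
    (hx : x ∈ interp G M ρ) :
    ∃ S : Set (Set α × α), S.Finite ∧ (∀ p ∈ S, ∃ y, G.j p = some y) ∧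
      G.Supports S M ρ x := by
  induction M generalizing ρ x with
  | var n => exact ⟨∅, Set.finite_empty, by simp, fun _ _ => hx⟩
  | app M N ihM ihN =>
    obtain ⟨a, ha, haN, z, hj, hz⟩ := hx
    obtain ⟨SM, hSMf, hSMj, hSM⟩ := ihM hz
    choose! SN hSNf hSNj hSN using fun w (hw : w ∈ a) => ihN (haN hw)
    refine ⟨insert (a, x) (SM ∪ ⋃ w ∈ a, SN w),
      ((hSMf.union (ha.biUnion hSNf)).insert _), ?_, fun Q hQ => ?_⟩
    · simp only [Set.mem_insert_iff, Set.mem_union, Set.mem_iUnion]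
      rintro p (rfl | hp | ⟨w, hw, hp⟩)
      exacts [⟨z, hj⟩, hSMj p hp, hSNj w hw p hp]
    · refine ⟨a, ha, fun w hw => ?_, z, ?_, ?_⟩
      · exact (hSN w hw).mono (fun p hp => Or.inr (Or.inr (Set.mem_biUnion hw hp))) Q hQ
      · rw [hQ _ (Set.mem_insert _ _), hj]
      · exact (hSM.mono fun p hp => Or.inr (Or.inl hp)) Q hQ
  | lam M ih =>
    obtain ⟨a, u, ha, hj, hu⟩ := hx
    obtain ⟨S, hSf, hSj, hS⟩ := ih hu
    refine ⟨insert (a, u) S, hSf.insert _, ?_, fun Q hQ => ⟨a, u, ha, ?_, ?_⟩⟩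
    · rintro p (rfl | hp)
      exacts [⟨x, hj⟩, hSj p hp]
    · rw [hQ _ (Set.mem_insert _ _), hj]
    · exact (hS.mono (Set.subset_insert _ _)) Q hQ

def elems (G : PrePair α) (S : Set (Set α × α)) : Set α :=
  ⋃ p ∈ S, insert p.2 p.1 ∪ {y | G.j p = some y}

theorem elems_subset_carrier {G : PrePair α} (hG : G.Valid) {S : Set (Set α × α)}
    (hS : ∀ p ∈ S, ∃ y, G.j p = some y) : G.elems S ⊆ G.carrier := by
  simp only [elems, Set.iUnion_subset_iff]
  intro p hp
  obtain ⟨y, hy⟩ := hS p hp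
  obtain ⟨-, hpC, hxC, hyC⟩ := hG.2.1 p.1 p.2 y hy
  refine Set.union_subset (Set.insert_subset hxC hpC) ?_
  rintro y' (hy' : G.j p = some y')
  rw [hy, Option.some_inj] at hy'
  exact hy' ▸ hyC

theorem elems_finite {G : PrePair α} (hG : G.Valid) {S : Set (Set α × α)} (hSf : S.Finite)
    (hS : ∀ p ∈ S, ∃ y, G.j p = some y) : (G.elems S).Finite := by
  refine hSf.biUnion fun p hp => Set.Finite.union ?_ ?_
  · obtain ⟨y, hy⟩ := hS p hp
    exact (hG.2.1 p.1 p.2 y hy).1.insert _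
  · exact Set.Subsingleton.finite fun y hy y' hy' => Option.some_injective _ (hy.symm.trans hy')

open scoped Classical in
noncomputable def restrict (G : PrePair α) (C : Set α) (S : Set (Set α × α)) : PrePair α where
  carrier := C
  j p := if p ∈ S then G.j p else none

theorem restrict_j_eq_some {G : PrePair α} {C : Set α} {S : Set (Set α × α)}
    {p : Set α × α} {y : α} : (G.restrict C S).j p = some y ↔ p ∈ S ∧ G.j p = some y := by
  simp only [restrict]
  split_ifs with hp <;> simp [hp]

theorem restrict_subpair {G : PrePair α} {C : Set α} (hC : C ⊆ G.carrier)
    (S : Set (Set α × α)) : (G.restrict C S).Subpair G :=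
  ⟨hC, fun _ _ h => (restrict_j_eq_some.1 h).2⟩

theorem restrict_valid {G : PrePair α} (hG : G.Valid) {C : Set α} (hC : C.Nonempty)
    {S : Set (Set α × α)} (hSC : G.elems S ⊆ C) : (G.restrict C S).Valid := by
  refine ⟨hC, fun a x y h => ?_, fun p q y hp hq => ?_⟩
  · obtain ⟨hp, hj⟩ := restrict_j_eq_some.1 h
    have hsub : insert x a ∪ {y | G.j (a, x) = some y} ⊆ C :=
      (Set.subset_biUnion_of_mem (u := fun p => insert p.2 p.1 ∪ {y | G.j p = some y})
        hp).trans hSC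
    exact ⟨(hG.2.1 a x y hj).1, fun b hb => hsub (Or.inl (Or.inr hb)),
      hsub (Or.inl (Or.inl rfl)), hsub (Or.inr hj)⟩
  · exact hG.2.2 p q y (restrict_j_eq_some.1 hp).2 (restrict_j_eq_some.1 hq).2

theorem Subpair.j_eq_of_restrict {G B : PrePair α} {C : Set α} {S : Set (Set α × α)}
    (hB : (G.restrict C S).Subpair B) (hS : ∀ p ∈ S, ∃ y, G.j p = some y) :
    ∀ p ∈ S, B.j p = G.j p := by
  intro p hp
  obtain ⟨y, hy⟩ := hS p hp
  rw [hB.2 p y (restrict_j_eq_some.2 ⟨hp, hy⟩), hy]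

end PrePair

namespace FC

variable {α : Type u}

open PrePair

theorem base_injective : Function.Injective (base : α → FC α) :=
  fun _ _ h => by cases h; rfl

theorem base_mem_compCarrier {B : PrePair α} {b : α} (hb : b ∈ B.carrier) :
    base b ∈ compCarrier B :=
  Set.mem_iUnion.2 ⟨0, b, hb, rfl⟩

theorem mem_listOf {s : Set (FC α)} (hs : s.Finite) {t : FC α} : t ∈ listOf s ↔ t ∈ s := by
  simp [listOf, hs]

theorem oldVal_base_iff {B : PrePair α} {a : Set α} {w : α} {y : FC α} :
    OldVal B (base '' a) (base w) y ↔ ∃ y₀, B.j (a, w) = some y₀ ∧ y = base y₀ := by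
  constructor
  · rintro ⟨a₀, w₀, y₀, ha, hw, hj, rfl⟩
    obtain rfl := Set.image_injective.2 base_injective ha
    obtain rfl := base_injective hw
    exact ⟨y₀, hj, rfl⟩
  · rintro ⟨y₀, hj, rfl⟩
    exact ⟨a, w, y₀, rfl, rfl, hj, rfl⟩

theorem completion_j_eq_some {B : PrePair α} {a : Set (FC α)} {w y : FC α}
    (h : (completion B).j (a, w) = some y) :
    OldVal B a w y ∨
      a.Finite ∧ a ⊆ compCarrier B ∧ w ∈ compCarrier B ∧ y = node (listOf a) w := by
  change jbar B (a, w) = some y at h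
  simp only [jbar] at h
  split_ifs at h with hC hold
  · exact Or.inl (Option.some_inj.1 h ▸ hold.choose_spec)
  · exact Or.inr ⟨hC.1, hC.2.1, hC.2.2, (Option.some_inj.1 h).symm⟩

theorem preservesJ_base {B : PrePair α} (hB : B.Valid) : PreservesJ base B (completion B) := by
  intro a w y h
  obtain ⟨ha, haC, hwC, -⟩ := hB.2.1 a w y h
  have hC : (base '' a).Finite ∧ base '' a ⊆ compCarrier B ∧ base w ∈ compCarrier B :=
    ⟨ha.image _, Set.image_subset_iff.2 fun b hb => base_mem_compCarrier (haC hb),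
      base_mem_compCarrier hwC⟩
  have hold : ∃ y', OldVal B (base '' a) (base w) y' := ⟨base y, oldVal_base_iff.2 ⟨y, h, rfl⟩⟩
  change jbar B _ = _
  rw [jbar, if_pos hC, dif_pos hold]
  obtain ⟨y₀, hj, hy⟩ := oldVal_base_iff.1 hold.choose_spec
  rw [hy, Option.some_inj.1 (hj.symm.trans h)]

/-- The canonical map `B̄ → G` extending `B ⊑ G`. The default `d` is never taken on the
carrier of `B̄` when `G` is total. -/
noncomputable def proj (G : PrePair α) (d : α) : FC α → α
  | base a => a
  | node l w => (G.j ({z | z ∈ l.map (proj G d)}, proj G d w)).getD d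

@[simp]
theorem proj_base (G : PrePair α) (d a : α) : proj G d (base a) = a := by
  rw [proj]

theorem proj_node_listOf (G : PrePair α) (d : α) {s : Set (FC α)} (hs : s.Finite)
    (w : FC α) :
    proj G d (node (listOf s) w) = (G.j (proj G d '' s, proj G d w)).getD d := by
  rw [proj]
  congr
  ext z
  simp [mem_listOf hs]

theorem j_proj_node_listOf {G : PrePair α} (hG : G.Total) (d : α) {s : Set (FC α)}
    (hs : s.Finite) (hsC : proj G d '' s ⊆ G.carrier) {w : FC α}
    (hw : proj G d w ∈ G.carrier) :
    G.j (proj G d '' s, proj G d w) = some (proj G d (node (listOf s) w)) := by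
  obtain ⟨y, hy⟩ := hG _ _ (hs.image _) hsC hw
  rw [proj_node_listOf G d hs, hy, Option.getD_some]

theorem mapsTo_proj {G B : PrePair α} (hGv : G.Valid) (hGt : G.Total)
    (hBG : B.carrier ⊆ G.carrier) (d : α) :
    Set.MapsTo (proj G d) (compCarrier B) G.carrier := by
  have hbase : ∀ t ∈ baseSet B, proj G d t ∈ G.carrier := by
    rintro _ ⟨b, hb, rfl⟩
    exact (proj_base G d b).symm ▸ hBG hb
  suffices ∀ n, Set.MapsTo (proj G d) (stage B n) G.carrier from
    fun t ht => (Set.mem_iUnion.1 ht).elim fun n hn => this n hn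
  intro n
  induction n with
  | zero => exact hbase
  | succ n ih =>
    rintro t (ht | ⟨a, w, ha, haS, hwS, -, rfl⟩)
    · exact hbase t ht
    · have hj := j_proj_node_listOf hGt d ha (ih.mono_left haS).image_subset (ih hwS)
      exact (hGv.2.1 _ _ _ hj).2.2.2

theorem preservesJ_proj {G B : PrePair α} (hGv : G.Valid) (hGt : G.Total) (hBG : B.Subpair G)
    (d : α) : PreservesJ (proj G d) (completion B) G := by
  intro a w y h
  rcases completion_j_eq_some h with ⟨a₀, w₀, y₀, rfl, rfl, hj, rfl⟩ | ⟨ha, haC, hw, rfl⟩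
  · simpa [Set.image_image] using hBG.2 _ _ hj
  · have hmaps := mapsTo_proj hGv hGt hBG.1 d
    exact j_proj_node_listOf hGt d ha ((hmaps.mono_left haC).image_subset) (hmaps hw)

end FC

theorem exists_finite_separating_subpair_general {α : Type u} (G : PrePair α)
    (hG : PrePair.IsGraphModel G) (M N : Term)
    (x : α) (hx : x ∈ interpC G M) (hx' : x ∉ interpC G N) :
    ∃ A : PrePair α, PrePair.Subpair A G ∧ A.carrier.Finite ∧ A.Valid ∧
      x ∈ A.carrier ∧
      ∀ B : PrePair α, B.Valid → PrePair.Subpair A B → PrePair.Subpair B G →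
        (x ∈ interpC B M ∧ x ∉ interpC B N) ∧
        (FC.base x ∈ interpC (completion B) M ∧
          FC.base x ∉ interpC (completion B) N) := by
  obtain ⟨hGv, hGt, -⟩ := hG
  obtain ⟨S, hSf, hSj, hS⟩ := G.exists_finite_supports M hx
  have hxG : x ∈ G.carrier := hGv.interp_subset_carrier M (fun _ => Set.empty_subset _) hx
  refine ⟨G.restrict (insert x (G.elems S)) S,
    PrePair.restrict_subpair (Set.insert_subset hxG (PrePair.elems_subset_carrier hGv hSj)) S,
    (PrePair.elems_finite hGv hSf hSj).insert x,
    PrePair.restrict_valid hGv (Set.insert_nonempty _ _) (Set.subset_insert _ _),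
    Set.mem_insert _ _, fun B hBv hAB hBG => ?_⟩
  have hxB : x ∈ interpC B M := hS B (hAB.j_eq_of_restrict hSj)
  have hxB' : x ∉ interpC B N := fun h => hx' (hBG.preservesJ_id.mem_interpC h)
  refine ⟨⟨hxB, hxB'⟩, (FC.preservesJ_base hBv).mem_interpC hxB, fun h => hx' ?_⟩
  simpa using (FC.preservesJ_proj hGv hGt hBG x).mem_interpC h

/-- If `α ∈ ⟦M⟧^G ∖ ⟦N⟧^G` in a graph model `G`, there is a
finite subpair `A ⊑ G` containing `α` such that for every partial pair `B` with
`A ⊑ B ⊑ G` one has `α ∈ ⟦M⟧^B ∖ ⟦N⟧^B` and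
`α ∈ ⟦M⟧^{G_B̄} ∖ ⟦N⟧^{G_B̄}` in the graph model freely generated by `B`. -/
theorem exists_finite_separating_subpair {α : Type u} (G : PrePair α)
    (hG : PrePair.IsGraphModel G) (M N : Term)
    (hM : Term.Closed M) (hN : Term.Closed N)
    (x : α) (hx : x ∈ interpC G M) (hx' : x ∉ interpC G N) :
    ∃ A : PrePair α, PrePair.Subpair A G ∧ A.carrier.Finite ∧ A.Valid ∧
      x ∈ A.carrier ∧
      ∀ B : PrePair α, B.Valid → PrePair.Subpair A B → PrePair.Subpair B G →
        (x ∈ interpC B M ∧ x ∉ interpC B N) ∧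
        (FC.base x ∈ interpC (completion B) M ∧
          FC.base x ∉ interpC (completion B) N) :=
  exists_finite_separating_subpair_general G hG M N x hx hx'
end

section
/- Let G and G' be graph models whose webs satisfy G ⊲ G' (G is a retract of G'). Then Th_⊑(G') ⊆ Th_⊑(G) and Th(G') ⊆ Th(G). -/
universe u v

open Term

/-! A morphism `f` of partial pairs only pushes interpretations forward,
`f '' ⟦M⟧ρ ⊆ ⟦M⟧(f ∘ ρ)`. For a retraction `π ∘ e = id` this suffices: if
`y ∈ ⟦M⟧ρ` in `G` then `e y ∈ ⟦M⟧(e ∘ ρ) ⊆ ⟦N⟧(e ∘ ρ)` in `G'`, and applying `π`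
gives `y = π (e y) ∈ ⟦N⟧(π ∘ e ∘ ρ) = ⟦N⟧ρ`. -/

theorem image_envCons {α : Type u} {β : Type v} (f : α → β) (a : Set α) (ρ : ℕ → Set α) :
    (fun n => f '' envCons a ρ n) = envCons (f '' a) (fun n => f '' ρ n) := by
  funext n; cases n <;> rfl

theorem interp_subset_carrier {α : Type u} {P : PrePair α} (hP : P.Valid) :
    ∀ (M : Term) (ρ : ℕ → Set α), (∀ n, ρ n ⊆ P.carrier) → interp P M ρ ⊆ P.carrier
  | Term.var n, _, hρ => hρ n
  | Term.app _ _, _, _ => by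
      rintro y ⟨a, -, -, z, hj, -⟩
      exact (hP.2.1 a y z hj).2.2.1
  | Term.lam _, _, _ => by
      rintro y ⟨a, x, -, hj, -⟩
      exact (hP.2.1 a x y hj).2.2.2

theorem IsMorphism.image_interp_subset {α : Type u} {β : Type v} {P : PrePair α}
    {Q : PrePair β} {f : α → β} (hP : P.Valid) (hf : IsMorphism P Q f) :
    ∀ (M : Term) (ρ : ℕ → Set α), f '' interp P M ρ ⊆ interp Q M (fun n => f '' ρ n)
  | Term.var _, _ => subset_rfl
  | Term.app M N, ρ => by
      rintro _ ⟨y, ⟨a, ha, haN, z, hj, hzM⟩, rfl⟩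
      obtain ⟨-, haP, hyP, -⟩ := hP.2.1 a y z hj
      exact ⟨f '' a, ha.image f,
        (Set.image_mono haN).trans (hf.image_interp_subset hP N ρ),
        f z, hf.2 a y z haP hyP hj, hf.image_interp_subset hP M ρ ⟨z, hzM, rfl⟩⟩
  | Term.lam M, ρ => by
      rintro _ ⟨y, ⟨a, x, ha, hj, hxM⟩, rfl⟩
      obtain ⟨-, haP, hxP, -⟩ := hP.2.1 a x y hj
      refine ⟨f '' a, f x, ha.image f, hf.2 a x y haP hxP hj, ?_⟩
      rw [← image_envCons]
      exact hf.image_interp_subset hP M (envCons a ρ) ⟨x, hxM, rfl⟩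

theorem ThLe_subset_of_retract {α : Type u} {β : Type v} {P : PrePair α} {Q : PrePair β}
    (hP : P.Valid) (hQ : Q.Valid) {e : α → β} {π : β → α} (he : IsMorphism P Q e)
    (hπ : IsMorphism Q P π) (hπe : Set.LeftInvOn π e P.carrier) :
    ThLe Q ⊆ ThLe P := by
  rintro ⟨M, N⟩ hMN ρ hρ y hy
  have heρ : ∀ n, e '' ρ n ⊆ Q.carrier := fun n =>
    Set.image_subset_iff.mpr ((hρ n).trans he.1)
  have hey : e y ∈ interp Q N fun n => e '' ρ n :=
    hMN _ heρ (he.image_interp_subset hP M ρ ⟨y, hy, rfl⟩)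
  have hπey := hπ.image_interp_subset hQ N _ ⟨e y, hey, rfl⟩
  have hπeρ : (fun n => π '' (e '' ρ n)) = ρ := funext fun n => hπe.image_image' (hρ n)
  rwa [hπeρ, hπe (interp_subset_carrier hP M ρ hρ hy)] at hπey

theorem mem_Th_iff {α : Type u} (P : PrePair α) (p : Term × Term) :
    p ∈ Th P ↔ p ∈ ThLe P ∧ p.swap ∈ ThLe P :=
  ⟨fun h => ⟨fun ρ hρ => (h ρ hρ).le, fun ρ hρ => (h ρ hρ).ge⟩,
    fun h ρ hρ => (h.1 ρ hρ).antisymm (h.2 ρ hρ)⟩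

/-- If the web of `G` is a retract of the web of `G'`, then
`Th_⊑(G') ⊆ Th_⊑(G)` and `Th(G') ⊆ Th(G)`. -/
theorem retract_theories {α : Type u} {β : Type v} (G : PrePair α) (G' : PrePair β)
    (hG : PrePair.IsGraphModel G) (hG' : PrePair.IsGraphModel G')
    (hret : ∃ (e : α → β) (π : β → α), IsMorphism G G' e ∧ IsMorphism G' G π ∧
      ∀ x ∈ G.carrier, π (e x) = x) :
    ThLe G' ⊆ ThLe G ∧ Th G' ⊆ Th G := by
  obtain ⟨e, π, he, hπ, hπe⟩ := hret
  have hle : ThLe G' ⊆ ThLe G := ThLe_subset_of_retract hG.1 hG'.1 he hπ hπe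
  refine ⟨hle, fun p hp => ?_⟩
  rw [mem_Th_iff] at hp ⊢
  exact ⟨hle hp.1, hle hp.2⟩
end
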